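/- arXiv:1710.05287 — 7 statements merged into one kernel-verified Lean document; each statement's English description precedes it below -/
import Mathlib

section
/- Suppose π₀, π₁ > 0 with π₀ + π₁ = 1, and α₀₀, α₀₁, α₁₀, α₁₁ ≥ 0 with α₀₁ = α₁₀, and suppose there is d > 0 such that π₀α₀₀ + π₁α₀₁ = d and π₀α₁₀ + π₁α₁₁ = d. Define p_ab = π_b α_ab / d for a, b ∈ {0,1}, and λ = p₀₀ + p₁₁ − 1. Then for every integer k ≥ 1, the sum over all cyclic label sequences σ : ℤ/kℤ → {0,1} of the product ∏_{i=0}^{k−1} π_{σ(i+1)} α_{σ(i) σ(i+1)} equals d^k (1 + λ^k). -/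
/-!
Writing `π_b α_ab = d p_ab`, each cyclic product is `d^k` times the weight of a closed walk of
length `k` for the matrix `P = (p_ab)`, and the sum of these weights over all closed walks is
`tr (P^k)`. The rows of `P` sum to `1`, so its eigenvalues are `1` and `λ = tr P - 1`, whence
`tr (P^k) = 1 + λ^k`; this is derived from Cayley–Hamilton `P² = (tr P) P - (det P) 1`,
with `det P = λ`.
-/

open Finset Matrix

namespace Matrix

section Cyclic

variable {ι R : Type*} [Fintype ι] [CommSemiring R]

theorem sum_pi_fin_succ {n : ℕ} (f : (Fin (n + 1) → ι) → R) :
    ∑ σ, f σ = ∑ c, ∑ τ : Fin n → ι, f (vecCons c τ) := by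
  rw [← (Fin.consEquiv fun _ => ι).sum_comp, Fintype.sum_prod_type]
  rfl

variable [DecidableEq ι]

theorem pow_mulVec_apply_eq_sum_prod (M : Matrix ι ι R) (v : ι → R) (n : ℕ) (a : ι) :
    (M ^ n *ᵥ v) a = ∑ σ : Fin n → ι,
      (∏ i, M (vecCons a σ i.castSucc) (σ i)) * v (vecCons a σ (Fin.last n)) := by
  induction n generalizing a with
  | zero => simp
  | succ n ih =>
    rw [pow_succ', ← mulVec_mulVec, mulVec, dotProduct, sum_pi_fin_succ]
    refine sum_congr rfl fun c _ => ?_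
    rw [ih, mul_sum]
    refine sum_congr rfl fun τ _ => ?_
    simp [Fin.prod_univ_succ, ← Fin.succ_last, mul_assoc]

theorem sum_prod_cyclic_eq_trace_pow (M : Matrix ι ι R) (n : ℕ) :
    ∑ σ : Fin (n + 1) → ι, ∏ i, M (σ i) (σ (i + 1)) = trace (M ^ (n + 1)) := by
  have hcol : ∀ a, (M ^ (n + 1)) a a = (M ^ n *ᵥ fun c => M c a) a := by
    intro a
    rw [pow_succ, mul_apply]
    rfl
  simp only [trace, diag, hcol, pow_mulVec_apply_eq_sum_prod, sum_pi_fin_succ]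
  refine sum_congr rfl fun a _ => sum_congr rfl fun τ _ => ?_
  simp [Fin.prod_univ_castSucc, Fin.coeSucc_eq_succ, Fin.last_add_one]

theorem sum_prod_zmod_eq_trace_pow (M : Matrix ι ι R) (k : ℕ) [NeZero k] :
    ∑ σ : ZMod k → ι, ∏ i, M (σ i) (σ (i + 1)) = trace (M ^ k) := by
  obtain ⟨n, rfl⟩ := Nat.exists_eq_succ_of_ne_zero (NeZero.ne k)
  exact sum_prod_cyclic_eq_trace_pow M n

end Cyclic

section FinTwo

variable {R : Type*} [CommRing R]

open Polynomial in
theorem sq_eq_trace_smul_sub_det_smul (M : Matrix (Fin 2) (Fin 2) R) :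
    M ^ 2 = trace M • M - det M • (1 : Matrix (Fin 2) (Fin 2) R) := by
  nontriviality R
  have h := aeval_self_charpoly M
  simp only [charpoly_fin_two, map_add, map_sub, map_mul, map_pow, aeval_X, aeval_C,
    Algebra.algebraMap_eq_smul_one, smul_mul_assoc, one_mul] at h
  rw [← sub_eq_zero, ← h]
  abel

theorem trace_pow_fin_two {M : Matrix (Fin 2) (Fin 2) R} {a b : R}
    (htr : trace M = a + b) (hdet : det M = a * b) :
    ∀ n, trace (M ^ n) = a ^ n + b ^ n
  | 0 => by simp [trace_one]; norm_num
  | 1 => by simpa using htr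
  | n + 2 => by
    rw [pow_add, sq_eq_trace_smul_sub_det_smul, mul_sub, Matrix.mul_smul, Matrix.mul_smul,
      mul_one, ← pow_succ, trace_sub, trace_smul, trace_smul, trace_pow_fin_two htr hdet n,
      trace_pow_fin_two htr hdet (n + 1), htr, hdet, smul_eq_mul, smul_eq_mul]
    ring

theorem trace_pow_fin_two_of_row_sums_eq_one {P : Matrix (Fin 2) (Fin 2) R}
    (h0 : P 0 0 + P 0 1 = 1) (h1 : P 1 0 + P 1 1 = 1) (n : ℕ) :
    trace (P ^ n) = 1 + (P 0 0 + P 1 1 - 1) ^ n := by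
  rw [trace_pow_fin_two (a := 1) (b := P 0 0 + P 1 1 - 1), one_pow]
  · rw [trace_fin_two]; ring
  · rw [det_fin_two, eq_sub_of_add_eq' h0, eq_sub_of_add_eq h1]; ring

end FinTwo

end Matrix

theorem stmt2_general (π : Fin 2 → ℝ) (α : Fin 2 → Fin 2 → ℝ) (d lam : ℝ)
    (p : Fin 2 → Fin 2 → ℝ)
    (hd : 0 < d)
    (hd0 : π 0 * α 0 0 + π 1 * α 0 1 = d)
    (hd1 : π 0 * α 1 0 + π 1 * α 1 1 = d)
    (hp : ∀ a b, p a b = π b * α a b / d)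
    (hlam : lam = p 0 0 + p 1 1 - 1)
    (k : ℕ) [NeZero k] :
    ∑ σ : ZMod k → Fin 2, ∏ i : ZMod k, π (σ (i + 1)) * α (σ i) (σ (i + 1))
      = d ^ k * (1 + lam ^ k) := by
  have hweight : ∀ a b, π b * α a b = d * p a b := fun a b => by
    rw [hp]; field_simp
  have hrow : ∀ a, π 0 * α a 0 + π 1 * α a 1 = d → p a 0 + p a 1 = 1 := fun a h => by
    rw [hp, hp, ← add_div, h, div_self hd.ne']
  simp only [hweight, prod_mul_distrib, prod_const, card_univ, ZMod.card, ← mul_sum]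
  rw [hlam]
  exact congrArg (d ^ k * ·) ((sum_prod_zmod_eq_trace_pow (of p) k).trans
    (trace_pow_fin_two_of_row_sums_eq_one (hrow 0 hd0) (hrow 1 hd1) k))

/-- In a two-community SBM with common average degree `d`, the sum over all
cyclic label sequences `σ : ZMod k → {0,1}` of
`∏_{i} π_{σ(i+1)} α_{σ(i) σ(i+1)}` equals `d^k (1 + λ^k)`, where `λ` is the
second eigenvalue of the transition matrix `p_ab = π_b α_ab / d`. -/
theorem stmt2 (π : Fin 2 → ℝ) (α : Fin 2 → Fin 2 → ℝ) (d lam : ℝ)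
    (p : Fin 2 → Fin 2 → ℝ)
    (hπ0 : 0 < π 0) (hπ1 : 0 < π 1) (hπsum : π 0 + π 1 = 1)
    (hα : ∀ a b, 0 ≤ α a b) (hsym : α 0 1 = α 1 0) (hd : 0 < d)
    (hd0 : π 0 * α 0 0 + π 1 * α 0 1 = d)
    (hd1 : π 0 * α 1 0 + π 1 * α 1 1 = d)
    (hp : ∀ a b, p a b = π b * α a b / d)
    (hlam : lam = p 0 0 + p 1 1 - 1)
    (k : ℕ) [NeZero k] :
    ∑ σ : ZMod k → Fin 2, ∏ i : ZMod k, π (σ (i + 1)) * α (σ i) (σ (i + 1))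
      = d ^ k * (1 + lam ^ k) :=
  stmt2_general π α d lam p hd hd0 hd1 hp hlam k
end

section
/- Fix real parameters r ≥ 1, λ < 0 with 1 + rλ ≥ 0 and r + λ > 0, and d > 0. Let y* = min{(r+1)/(2(r+λ)), 1} and x* = 0. Then min{ (x*/(1+r))·d(1−λ) + (y*r/(1+r))·d(1+λ/r) , ((1−x*)/(1+r))·d(1−λ) + ((1−y*)r/(1+r))·d(1+λ/r) } = (y*(r+λ)/(1+r))·d. -/
/-- Proposition 2, conclusion 2, second identity: at the minimizer
`x* = 0`, `y* = min{(r+1)/(2(r+λ)), 1}` one has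
`min{(x*/(1+r))d(1-λ) + (y*r/(1+r))d(1+λ/r),
     ((1-x*)/(1+r))d(1-λ) + ((1-y*)r/(1+r))d(1+λ/r)}
  = (y*(r+λ)/(1+r))d`. -/
theorem stmt8 (r lam d xs ys : ℝ)
    (hr : 1 ≤ r) (hlam : lam < 0) (h1 : 0 ≤ 1 + r * lam) (h2 : 0 < r + lam)
    (hd : 0 < d)
    (hys : ys = min ((r + 1) / (2 * (r + lam))) 1) (hxs : xs = 0) :
    min (xs / (1 + r) * (d * (1 - lam)) + ys * r / (1 + r) * (d * (1 + lam / r)))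
        ((1 - xs) / (1 + r) * (d * (1 - lam)) +
          (1 - ys) * r / (1 + r) * (d * (1 + lam / r)))
      = ys * (r + lam) / (1 + r) * d := by
  subst hxs
  have hr0 : (0:ℝ) < r := by linarith
  have hr1 : (0:ℝ) < 1 + r := by linarith
  have hle : ys ≤ (r + 1) / (2 * (r + lam)) := hys ▸ min_le_left _ _
  have h2' : (0:ℝ) < 2 * (r + lam) := by linarith
  have key : ys * (2 * (r + lam)) ≤ r + 1 := by
    calc ys * (2 * (r + lam)) ≤ (r + 1) / (2 * (r + lam)) * (2 * (r + lam)) :=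
          mul_le_mul_of_nonneg_right hle h2'.le
      _ = r + 1 := by field_simp
  rw [min_eq_left]
  · field_simp
    ring
  · rw [← sub_nonneg]
    have heq : (1 - 0) / (1 + r) * (d * (1 - lam)) +
          (1 - ys) * r / (1 + r) * (d * (1 + lam / r)) -
        (0 / (1 + r) * (d * (1 - lam)) + ys * r / (1 + r) * (d * (1 + lam / r)))
        = d * (1 + r - ys * (2 * (r + lam))) / (1 + r) := by
      field_simp
      ring
    rw [heq]
    apply div_nonneg _ hr1.le
    exact mul_nonneg hd.le (by linarith)
end

section
/- Fix real parameters r ≥ 1, λ < 0 with 1 + rλ ≥ 0 and r + λ > 0. Define f(x,y) = rλ(x−y)² + (x + ry − (1+r)/2)² and C(r,λ) = inf_{0≤x≤1, 0≤y≤1} f(x,y) + (1+r)²/4. Then C(r,λ) = (r² + 2rλ + 1)/2 if r ≤ 1 − 2λ, and C(r,λ) = (r + 2λ)(1+r)²/(4(r+λ)) if r ≥ 1 − 2λ. Moreover C(r,λ) < (1+r)²/4. -/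
/-- The quadratic form `f(x,y) = rλ(x-y)² + (x + ry - (1+r)/2)²`. -/
noncomputable def fQuad (r lam x y : ℝ) : ℝ :=
  r * lam * (x - y) ^ 2 + (x + r * y - (1 + r) / 2) ^ 2

/-- `C(r,λ) = inf_{0≤x≤1,0≤y≤1} f(x,y) + (1+r)²/4`. -/
noncomputable def Crl (r lam : ℝ) : ℝ :=
  sInf {z : ℝ | ∃ x y : ℝ, 0 ≤ x ∧ x ≤ 1 ∧ 0 ≤ y ∧ y ≤ 1 ∧
    z = fQuad r lam x y + (1 + r) ^ 2 / 4}

lemma lb_case1 (r lam x y : ℝ)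
    (hr : 1 ≤ r) (hlam : lam < 0) (hc : r ≤ 1 - 2 * lam)
    (hx0 : 0 ≤ x) (hx1 : x ≤ 1) (hy0 : 0 ≤ y) (hy1 : y ≤ 1) :
    (r ^ 2 + 2 * r * lam + 1) / 2 ≤ fQuad r lam x y + (1 + r) ^ 2 / 4 := by
  unfold fQuad
  have hr0 : (0:ℝ) ≤ r := by linarith
  have ha1 : 0 ≤ r * (1 - 2 * lam) - 1 := by nlinarith
  have ha2 : 0 ≤ r * (1 - 2 * lam - r) := by nlinarith
  have ha3 : 0 ≤ r * (1 - lam) := by nlinarith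
  nlinarith [mul_nonneg ha1 (mul_nonneg hx0 (sub_nonneg.2 hx1)),
    mul_nonneg ha2 (mul_nonneg hy0 (sub_nonneg.2 hy1)),
    mul_nonneg ha3 (sq_nonneg (x + y - 1))]

lemma lb_case2 (r lam x y : ℝ)
    (hr : 1 ≤ r) (hlam : lam < 0) (h2 : 0 < r + lam)
    (hx0 : 0 ≤ x) (hx1 : x ≤ 1) (hy0 : 0 ≤ y) (hy1 : y ≤ 1) :
    (r + 2 * lam) * (1 + r) ^ 2 / (4 * (r + lam)) ≤
      fQuad r lam x y + (1 + r) ^ 2 / 4 := by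
  have h4 : 0 < 4 * (r + lam) := by linarith
  rw [div_le_iff₀ h4]
  unfold fQuad
  have hr0 : (0:ℝ) ≤ r := by linarith
  nlinarith [mul_nonneg (mul_nonneg (le_of_lt (neg_pos.2 hlam)) (sq_nonneg (1 + r)))
      (mul_nonneg hx0 (sub_nonneg.2 hx1)),
    mul_nonneg hr0 (sq_nonneg ((1 - lam) * x + (r + lam) * y - (1 + r) / 2))]

/-- Proposition 2, conclusion 3: explicit formula for `C(r,λ)` and the
bound `C(r,λ) < (1+r)²/4`. -/
theorem stmt9 (r lam : ℝ)
    (hr : 1 ≤ r) (hlam : lam < 0) (h1 : 0 ≤ 1 + r * lam) (h2 : 0 < r + lam) :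
    (r ≤ 1 - 2 * lam → Crl r lam = (r ^ 2 + 2 * r * lam + 1) / 2) ∧
    (1 - 2 * lam ≤ r → Crl r lam = (r + 2 * lam) * (1 + r) ^ 2 / (4 * (r + lam))) ∧
    Crl r lam < (1 + r) ^ 2 / 4 := by
  set S := {z : ℝ | ∃ x y : ℝ, 0 ≤ x ∧ x ≤ 1 ∧ 0 ≤ y ∧ y ≤ 1 ∧
    z = fQuad r lam x y + (1 + r) ^ 2 / 4} with hS
  have hP1 : r ≤ 1 - 2 * lam → Crl r lam = (r ^ 2 + 2 * r * lam + 1) / 2 := by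
    intro hc
    have hmem : (r ^ 2 + 2 * r * lam + 1) / 2 ∈ S := by
      refine ⟨1, 0, by norm_num, by norm_num, le_refl 0, by norm_num, ?_⟩
      unfold fQuad; ring
    have hlb : ∀ z ∈ S, (r ^ 2 + 2 * r * lam + 1) / 2 ≤ z := by
      rintro z ⟨x, y, hx0, hx1, hy0, hy1, rfl⟩
      exact lb_case1 r lam x y hr hlam hc hx0 hx1 hy0 hy1
    exact le_antisymm (csInf_le ⟨_, hlb⟩ hmem) (le_csInf ⟨_, hmem⟩ hlb)
  have hP2 : 1 - 2 * lam ≤ r → Crl r lam =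
      (r + 2 * lam) * (1 + r) ^ 2 / (4 * (r + lam)) := by
    intro hc
    have h2' : (0:ℝ) < 2 * (r + lam) := by linarith
    set y0 : ℝ := (r - 1 + 2 * lam) / (2 * (r + lam)) with hy0def
    have hy0 : 0 ≤ y0 := div_nonneg (by linarith) (le_of_lt h2')
    have hy1 : y0 ≤ 1 := by
      rw [div_le_one h2']; linarith
    have hmem : (r + 2 * lam) * (1 + r) ^ 2 / (4 * (r + lam)) ∈ S := by
      refine ⟨1, y0, by norm_num, le_refl 1, hy0, hy1, ?_⟩
      unfold fQuad
      rw [hy0def]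
      field_simp
      ring
    have hlb : ∀ z ∈ S, (r + 2 * lam) * (1 + r) ^ 2 / (4 * (r + lam)) ≤ z := by
      rintro z ⟨x, y, hx0, hx1, hy0', hy1', rfl⟩
      exact lb_case2 r lam x y hr hlam h2 hx0 hx1 hy0' hy1'
    exact le_antisymm (csInf_le ⟨_, hlb⟩ hmem) (le_csInf ⟨_, hmem⟩ hlb)
  refine ⟨hP1, hP2, ?_⟩
  rcases le_or_gt r (1 - 2 * lam) with hc | hc
  · rw [hP1 hc]
    nlinarith [mul_nonneg (sub_nonneg.2 hr) (sub_nonneg.2 hc),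
      mul_pos (neg_pos.2 hlam) (lt_of_lt_of_le one_pos hr)]
  · rw [hP2 (le_of_lt hc)]
    rw [div_lt_iff₀ (by linarith : (0:ℝ) < 4 * (r + lam))]
    nlinarith [mul_pos (neg_pos.2 hlam) (show (0:ℝ) < (1 + r) ^ 2 by positivity)]
end

section
/- Fix real parameters r ≥ 1, λ < 0 with 1 + rλ ≥ 0 and r + λ > 0. Define f(x,y) = rλ(x−y)² + (x + ry − (1+r)/2)², C(r,λ) = inf_{0≤x≤1, 0≤y≤1} f(x,y) + (1+r)²/4, y* = min{(r+1)/(2(r+λ)), 1}, and x* = 0. Then (x*, y*) is a minimizer of f(x,y) + (1+r)²/4 over [0,1]², i.e., f(x*, y*) + (1+r)²/4 = C(r,λ); moreover y* = 1 if and only if r ≤ 1 − 2λ. -/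
set_option maxHeartbeats 1000000

/-- Pointwise lower bound: `(0, min{(r+1)/(2(r+λ)),1})` minimizes `fQuad` over `[0,1]²`. -/
lemma fq_lower (r lam x y : ℝ)
    (hr : 1 ≤ r) (hlam : lam < 0) (h1 : 0 ≤ 1 + r * lam) (h2 : 0 < r + lam)
    (hx : 0 ≤ x) (hx1 : x ≤ 1) (hy : 0 ≤ y) (hy1 : y ≤ 1) :
    fQuad r lam 0 (min ((r + 1) / (2 * (r + lam))) 1) ≤ fQuad r lam x y := by
  have hden : (0:ℝ) < 2 * (r + lam) := by linarith
  rcases le_or_gt ((r + 1) / (2 * (r + lam))) 1 with hA | hB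
  · rw [min_eq_left hA]
    have hval : fQuad r lam 0 ((r + 1) / (2 * (r + lam))) =
        lam * (1 + r) ^ 2 / (4 * (r + lam)) := by
      unfold fQuad; field_simp; ring
    rw [hval, div_le_iff₀ (by linarith : (0:ℝ) < 4 * (r + lam))]
    have key : lam * (1 + r) ^ 2 ≤ (r + lam) * fQuad r lam x y * 4 := by
      unfold fQuad
      nlinarith [sq_nonneg ((r + lam) * y - (1 + r) / 2 + (1 - lam) * x),
        mul_nonneg (mul_nonneg hx (sub_nonneg.2 hx1))
          (mul_pos (by linarith : (0:ℝ) < 1 + r) (by linarith : (0:ℝ) < 1 + r)).le]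
    linarith [key]
  · rw [min_eq_right hB.le]
    have hcb : r + 2 * lam < 1 := by
      rw [lt_div_iff₀ hden] at hB; linarith
    unfold fQuad
    rcases le_or_gt (2 * (1 - lam) * x) (1 - r - 2 * lam) with hs1 | hs1
    · have hB1 : 0 ≤ r * (r + lam) * (1 - y) *
          ((1 + r) - 2 * (1 - lam) * x - (r + lam) * (y + 1)) := by
        have h3 : 0 ≤ (1 + r) - 2 * (1 - lam) * x - (r + lam) * (y + 1) := by nlinarith
        have h0 : 0 ≤ r * (r + lam) * (1 - y) :=
          mul_nonneg (mul_nonneg (by linarith) h2.le) (by linarith)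
        exact mul_nonneg h0 h3
      have hC1 : 0 ≤ (r + lam) * (x * ((1 + r * lam) * x + (r - 1) - 2 * r * lam)) :=
        mul_nonneg h2.le (mul_nonneg hx (by nlinarith))
      have key : 0 ≤ (r + lam) * ((r * lam * (x - y) ^ 2 + (x + r * y - (1 + r) / 2) ^ 2)
          - (r * lam * (0 - 1) ^ 2 + (0 + r * 1 - (1 + r) / 2) ^ 2)) := by
        linarith [hB1, hC1]
      linarith [(mul_nonneg_iff_of_pos_left h2).mp key]
    rcases le_or_gt (1 + r) (2 * (1 - lam) * x) with hs2 | hs2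
    · have hB2 : 0 ≤ r * (r + lam) * y *
          ((r + lam) * y + 2 * (1 - lam) * x - (1 + r)) := by
        have h3 : 0 ≤ (r + lam) * y + 2 * (1 - lam) * x - (1 + r) := by nlinarith
        exact mul_nonneg (mul_nonneg (mul_nonneg (by linarith) h2.le) hy) h3
      have hC2 : 0 ≤ (r + lam) * ((1 - x) * ((1 + r) - (1 + r * lam) * (x + 1))) :=
        mul_nonneg h2.le (mul_nonneg (by linarith) (by nlinarith))
      have key : 0 ≤ (r + lam) * ((r * lam * (x - y) ^ 2 + (x + r * y - (1 + r) / 2) ^ 2)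
          - (r * lam * (0 - 1) ^ 2 + (0 + r * 1 - (1 + r) / 2) ^ 2)) := by
        linarith [hB2, hC2]
      linarith [(mul_nonneg_iff_of_pos_left h2).mp key]
    · have hb1 : 0 ≤ (r + lam) - (1 - lam) * (2 * x - 1) := by nlinarith
      have hb2 : 0 ≤ (r + lam) + (1 - lam) * (2 * x - 1) := by nlinarith
      have h5 : 0 ≤ (1 + r) ^ 2 / 4 * ((-lam) *
          (((r + lam) - (1 - lam) * (2 * x - 1)) *
           ((r + lam) + (1 - lam) * (2 * x - 1)))) :=
        mul_nonneg (by positivity) (mul_nonneg (by linarith) (mul_nonneg hb1 hb2))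
      have hP : 0 ≤ (r + lam) / 4 * ((1 - 2 * lam - r) *
          ((r - 1) + r * (-lam) * (5 + r - 2 * lam))) := by
        have h3 : 0 ≤ r * (-lam) * (5 + r - 2 * lam) :=
          mul_nonneg (mul_nonneg (by linarith) (by linarith)) (by linarith)
        exact mul_nonneg (by linarith) (mul_nonneg (by linarith) (by linarith))
      have hsq : 0 ≤ (1 - lam) ^ 2 *
          (r * ((r + lam) * y - (1 + r) / 2 + (1 - lam) * x) ^ 2) := by positivity
      have hpos : 0 < (1 - lam) ^ 2 * (r + lam) := mul_pos (pow_pos (by linarith) 2) h2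
      have key : 0 ≤ (1 - lam) ^ 2 * (r + lam) *
          ((r * lam * (x - y) ^ 2 + (x + r * y - (1 + r) / 2) ^ 2)
          - (r * lam * (0 - 1) ^ 2 + (0 + r * 1 - (1 + r) / 2) ^ 2)) := by
        linarith [h5, hP, hsq]
      linarith [(mul_nonneg_iff_of_pos_left hpos).mp key]

/-- Proposition 2, conclusion 4: `(x*, y*) = (0, min{(r+1)/(2(r+λ)), 1})` is a
minimizer of `f(x,y) + (1+r)²/4` over `[0,1]²`, and `y* = 1` iff `r ≤ 1-2λ`. -/
theorem stmt10 (r lam xs ys : ℝ)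
    (hr : 1 ≤ r) (hlam : lam < 0) (h1 : 0 ≤ 1 + r * lam) (h2 : 0 < r + lam)
    (hys : ys = min ((r + 1) / (2 * (r + lam))) 1) (hxs : xs = 0) :
    fQuad r lam xs ys + (1 + r) ^ 2 / 4 = Crl r lam ∧
    (ys = 1 ↔ r ≤ 1 - 2 * lam) := by
  subst hys hxs
  have hden : (0:ℝ) < 2 * (r + lam) := by linarith
  constructor
  · set t := min ((r + 1) / (2 * (r + lam))) 1 with ht
    have ht0 : 0 ≤ t := le_min (by positivity) one_pos.le
    have ht1 : t ≤ 1 := min_le_right _ _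
    have hmem : fQuad r lam 0 t + (1 + r) ^ 2 / 4 ∈
        {z : ℝ | ∃ x y : ℝ, 0 ≤ x ∧ x ≤ 1 ∧ 0 ≤ y ∧ y ≤ 1 ∧
          z = fQuad r lam x y + (1 + r) ^ 2 / 4} :=
      ⟨0, t, le_refl 0, zero_le_one, ht0, ht1, rfl⟩
    have hlb : ∀ z ∈ {z : ℝ | ∃ x y : ℝ, 0 ≤ x ∧ x ≤ 1 ∧ 0 ≤ y ∧ y ≤ 1 ∧
          z = fQuad r lam x y + (1 + r) ^ 2 / 4},
        fQuad r lam 0 t + (1 + r) ^ 2 / 4 ≤ z := by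
      rintro z ⟨x, y, hx, hx1, hy, hy1, rfl⟩
      have := fq_lower r lam x y hr hlam h1 h2 hx hx1 hy hy1
      linarith
    exact le_antisymm (le_csInf ⟨_, hmem⟩ hlb) (csInf_le ⟨_, hlb⟩ hmem)
  · rw [min_eq_right_iff, one_le_div₀ hden]
    constructor <;> intro <;> linarith
end

section
/- Fix real r ≥ 1, λ < 0 with 1 + rλ ≥ 0 and r + λ > 0, d > 0, and β with 0 < β ≤ 1. Define f(x,y) = rλ(x−y)² + (x + ry − (1+r)/2)², C(r,λ) = inf_{0≤x≤1, 0≤y≤1} f(x,y) + (1+r)²/4, y* = min{(r+1)/(2(r+λ)), 1}. Let v ∈ (0,1), set c = (2 log 2)/(βd) + 2v, and define ε₀ = 2(r+1)²c / min{r − 2rλ − 1, −λ(1+r)²/(r+λ)}. Assume: (a) (r+1)²c < (1+r)²/4 − C(r,λ); (b) with D = 2(r²+rλ)y* − r² − r assumed nonzero, ε₁ := min{ (1+r)²c/|D| , √(2(1+r)²c/(r²+rλ)) } satisfies ε₁ < min{(r+1)/(2(r+λ)), 1} − (r+1)/(2r); (c) (r+1)²c ≤ (r²+rλ)·(min{r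 − 2rλ − 1, −λ(1+r)²/(r+λ)})² / (8r²(1−λ)²). Then for all x, y with ε₀ ≤ x ≤ 1 and 1/2 ≤ y ≤ 1: β·( f(x,y)·d/(1+r)² + d/4 ) ≥ β·d·C(r,λ)/(1+r)² + 2 log 2 + 2βvd. -/
set_option maxHeartbeats 1000000

/-- Endpoint inequality for the concave quadratic appearing in case B-. -/
lemma auxEnd (r lam : ℝ) (hr : 1 ≤ r) (hlam : lam < 0) (h1 : 0 ≤ 1 + r*lam)
    (h2 : 0 < r + lam) (hclip : 0 < 1 - r - 2*lam) :
    0 ≤ (r+lam)*(r-2*r*lam-1)^2/2 + 2*(r+lam)*(r-2*r*lam-1)*(1+r*lam)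
      + lam*(1+r)^2*(1+r*lam) + 2*r*(1-lam)*(1-r-2*lam)*((r-2*r*lam-1)+(1+r*lam)) := by
  nlinarith [mul_nonneg h1 (sq_nonneg (r-1)), mul_pos h2 hclip, sq_nonneg (1+lam),
    mul_nonneg h1 h1, mul_nonneg (mul_nonneg h1 h1) h2.le, sq_nonneg (r-1),
    mul_nonneg h1 hclip.le, mul_nonneg (neg_nonneg.mpr hlam.le) h1,
    mul_nonneg (mul_nonneg h1 hclip.le) (by linarith : (0:ℝ) ≤ -lam)]

/-- Key quadratic bound in case B-. -/
lemma auxKey (r lam y K : ℝ) (hr : 1 ≤ r) (hlam : lam < 0) (h1 : 0 ≤ 1 + r*lam)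
    (h2 : 0 < r + lam) (hclip : 0 < 1 - r - 2*lam) (ha0 : 0 < r - 2*r*lam - 1)
    (ht0 : 0 < (1+r) - 2*r*(1-lam)*y) (htT : (1+r) - 2*r*(1-lam)*y ≤ 1 + r*lam)
    (hKa : 8*r*(1-lam)^2*K ≤ (r+lam)*(r-2*r*lam-1)^2) :
    ((1+r) - 2*r*(1-lam)*y)^2
      ≤ 4*(1+r*lam)*((r*(r+lam)*(1-y)^2 + r*(1-r-2*lam)*(1-y)) - K) := by
  have hT0 : 0 < 1 + r*lam := lt_of_lt_of_le ht0 htT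
  have h1l : (0:ℝ) < 1 - lam := by linarith
  have hr0 : (0:ℝ) < r := by linarith
  have hend := auxEnd r lam hr hlam h1 h2 hclip
  have hW0 : 0 ≤ (1+r*lam)*(r+lam)*(r-2*r*lam-1)^2/2
      + 2*r*(1-lam)*(1+r*lam)*(1-r-2*lam)*(r-2*r*lam-1) := by
    have e1 : 0 ≤ (1+r*lam)*(r+lam)*(r-2*r*lam-1)^2 :=
      mul_nonneg (mul_nonneg h1 h2.le) (sq_nonneg _)
    have e2 : 0 ≤ 2*r*(1-lam)*(1+r*lam)*(1-r-2*lam)*(r-2*r*lam-1) := by positivity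
    linarith
  have H1 : 0 ≤ ((1+r*lam)*(r+lam)*(r-2*r*lam-1)^2/2
      + 2*r*(1-lam)*(1+r*lam)*(1-r-2*lam)*(r-2*r*lam-1))
      * ((1 + r*lam) - ((1+r) - 2*r*(1-lam)*y)) :=
    mul_nonneg hW0 (by linarith)
  have H2 : 0 ≤ (((r+lam)*(r-2*r*lam-1)^2/2 + 2*(r+lam)*(r-2*r*lam-1)*(1+r*lam)
      + lam*(1+r)^2*(1+r*lam) + 2*r*(1-lam)*(1-r-2*lam)*((r-2*r*lam-1)+(1+r*lam)))
      * (1+r*lam)) * ((1+r) - 2*r*(1-lam)*y) :=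
    mul_nonneg (mul_nonneg hend hT0.le) ht0.le
  have H3 : 0 ≤ ((-lam) * (1+r)^2) * ((((1+r) - 2*r*(1-lam)*y)
      * ((1 + r*lam) - ((1+r) - 2*r*(1-lam)*y))) * (1 + r*lam)) := by
    apply mul_nonneg (mul_nonneg (by linarith) (sq_nonneg _))
    exact mul_nonneg (mul_nonneg ht0.le (by linarith)) hT0.le
  have H4 : 0 ≤ ((r+lam)*(r-2*r*lam-1)^2 - 8*r*(1-lam)^2*K) * (1+r*lam)^2 :=
    mul_nonneg (by linarith) (sq_nonneg _)
  have hpos : 0 < r*(1-lam)^2*(1+r*lam) := by positivity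
  nlinarith [H1, H2, H3, H4, hpos]


/-- Upper bound on `Crl` via the box point `(0,1)`. -/
lemma auxCrl (r lam : ℝ) (hr0 : 0 < r) (hlam : lam < 0) :
    Crl r lam ≤ fQuad r lam 0 1 + (1 + r) ^ 2 / 4 := by
  apply csInf_le
  · refine ⟨r * lam, ?_⟩
    rintro z ⟨x', y', hx0', hx1', hy0', hy1', rfl⟩
    have hxy : (x' - y') ^ 2 ≤ 1 := by nlinarith
    have hrl : r * lam < 0 := mul_neg_of_pos_of_neg hr0 hlam
    unfold fQuad
    nlinarith [sq_nonneg (x' + r * y' - (1 + r) / 2), sq_nonneg (1 + r)]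
  · exact ⟨0, 1, le_refl 0, zero_le_one, zero_le_one, le_refl 1, rfl⟩

/-- The central polynomial inequality: on the region `ε₀ ≤ x ≤ 1`, `1/2 ≤ y ≤ 1`
the quadratic `f` exceeds `f(0,1)` by at least `K`. -/
lemma mainIneq (r lam x y K m : ℝ) (hr : 1 ≤ r) (hlam : lam < 0)
    (h1 : 0 ≤ 1 + r*lam) (h2 : 0 < r + lam) (hclip : 0 < 1 - r - 2*lam)
    (hm0 : 0 < m) (hm1 : m ≤ r - 2*r*lam - 1) (hK0 : 0 < K)
    (hxK : 2*K ≤ m*x) (hx0 : 0 < x) (hxu : x ≤ 1) (hyl : 1/2 ≤ y) (hyu : y ≤ 1)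
    (hcc' : 8*r^2*(1-lam)^2*K ≤ r*(r+lam)*m^2)
    (hb' : 2*r*K < r*(1-r-2*lam)*(r-1) ∨ 8*r*K < (r+lam)*(r-1)^2) :
    fQuad r lam 0 1 + K ≤ fQuad r lam x y := by
  have hr0 : (0:ℝ) < r := by linarith
  have h1l : (0:ℝ) < 1 - lam := by linarith
  have ha0 : 0 < r - 2*r*lam - 1 := lt_of_lt_of_le hm0 hm1
  have expand : fQuad r lam x y - fQuad r lam 0 1 =
      (1 + r*lam)*x^2 + x*(2*r*(1-lam)*y - (1+r))
      + (r*(r+lam)*(1-y)^2 + r*(1-r-2*lam)*(1-y)) := by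
    unfold fQuad; ring
  have hg0 : 0 ≤ r*(r+lam)*(1-y)^2 + r*(1-r-2*lam)*(1-y) := by
    have hy' : (0:ℝ) ≤ 1 - y := by linarith
    have e1 : 0 ≤ r*(r+lam)*(1-y)^2 := mul_nonneg (mul_pos hr0 h2).le (sq_nonneg _)
    have e2 : 0 ≤ r*(1-r-2*lam)*(1-y) := mul_nonneg (mul_nonneg hr0.le hclip.le) hy'
    linarith
  rcases le_or_gt ((r+1)/(2*r)) y with hyA | hyB
  · -- Case A : y ≥ (r+1)/(2r), so L(y) ≥ m/2
    rw [div_le_iff₀ (by linarith : (0:ℝ) < 2*r)] at hyA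
    have hL : m/2 ≤ 2*r*(1-lam)*y - (1+r) := by
      nlinarith [mul_nonneg h1l.le (by linarith : 0 ≤ y*(2*r) - (r+1))]
    have hxL : K ≤ x*(2*r*(1-lam)*y - (1+r)) := by
      nlinarith [mul_le_mul_of_nonneg_left hL hx0.le]
    nlinarith [expand, hg0, hxL, mul_nonneg h1 (sq_nonneg x)]
  · -- Case B : y < (r+1)/(2r), so r - 1 ≤ 2r(1-y)
    rw [lt_div_iff₀ (by linarith : (0:ℝ) < 2*r)] at hyB
    have hw : r - 1 ≤ 2*r*(1-y) := by nlinarith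
    rcases le_or_gt 0 (2*r*(1-lam)*y - (1+r)) with hL0 | hL0
    · -- Case B+ : L ≥ 0, use g ≥ K
      have hgK : K ≤ r*(r+lam)*(1-y)^2 + r*(1-r-2*lam)*(1-y) := by
        rcases hb' with h | h
        · have e1 : 0 ≤ r*(r+lam)*(1-y)^2 := mul_nonneg (mul_pos hr0 h2).le (sq_nonneg _)
          nlinarith [mul_le_mul_of_nonneg_left hw (mul_nonneg hr0.le hclip.le), hr0]
        · have e2 : 0 ≤ r*(1-r-2*lam)*(1-y) :=
            mul_nonneg (mul_nonneg hr0.le hclip.le) (by linarith)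
          have e3 : (r-1)^2 ≤ (2*r*(1-y))^2 := by nlinarith
          nlinarith [mul_le_mul_of_nonneg_left e3 h2.le, hr0]
      nlinarith [expand, mul_nonneg hx0.le hL0, mul_nonneg h1 (sq_nonneg x), hgK]
    · -- Case B- : L < 0
      have ht0 : 0 < (1+r) - 2*r*(1-lam)*y := by linarith
      have htT : (1+r) - 2*r*(1-lam)*y ≤ 1 + r*lam := by
        nlinarith [mul_nonneg (mul_nonneg hr0.le h1l.le) (by linarith : 0 ≤ 2*y - 1)]
      have hT0 : 0 < 1 + r*lam := lt_of_lt_of_le ht0 htT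
      have hKa : 8*r*(1-lam)^2*K ≤ (r+lam)*(r-2*r*lam-1)^2 := by
        nlinarith [mul_le_mul_of_nonneg_left
          (mul_le_mul hm1 hm1 hm0.le ha0.le) (mul_pos hr0 h2).le, hr0, h2]
      have key := auxKey r lam y K hr hlam h1 h2 hclip ha0 ht0 htT hKa
      nlinarith [expand, key, sq_nonneg (2*(1+r*lam)*x - ((1+r) - 2*r*(1-lam)*y)), hT0]

/-- Proposition 2, conclusion 1, first implication: if `ε₀ ≤ x ≤ 1` and
`1/2 ≤ y ≤ 1` then `β(f(x,y)·d/(1+r)² + d/4) ≥ βdC(r,λ)/(1+r)² + 2log2 + 2βvd`. -/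
theorem stmt11 (r lam d β v c ε₀ ε₁ D ystar : ℝ)
    (hr : 1 ≤ r) (hlam : lam < 0) (h1 : 0 ≤ 1 + r * lam) (h2 : 0 < r + lam)
    (hd : 0 < d) (hβ0 : 0 < β) (hβ1 : β ≤ 1) (hv0 : 0 < v) (hv1 : v < 1)
    (hystar : ystar = min ((r + 1) / (2 * (r + lam))) 1)
    (hc : c = 2 * Real.log 2 / (β * d) + 2 * v)
    (hε₀ : ε₀ = 2 * (r + 1) ^ 2 * c /
      min (r - 2 * r * lam - 1) (-lam * (1 + r) ^ 2 / (r + lam)))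
    (hD : D = 2 * (r ^ 2 + r * lam) * ystar - r ^ 2 - r) (hD0 : D ≠ 0)
    (hε₁ : ε₁ = min ((1 + r) ^ 2 * c / |D|)
      (Real.sqrt (2 * (1 + r) ^ 2 * c / (r ^ 2 + r * lam))))
    (ha : (r + 1) ^ 2 * c < (1 + r) ^ 2 / 4 - Crl r lam)
    (hb : ε₁ < min ((r + 1) / (2 * (r + lam))) 1 - (r + 1) / (2 * r))
    (hcc : (r + 1) ^ 2 * c ≤ (r ^ 2 + r * lam) *
      (min (r - 2 * r * lam - 1) (-lam * (1 + r) ^ 2 / (r + lam))) ^ 2 /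
      (8 * r ^ 2 * (1 - lam) ^ 2)) :
    ∀ x y : ℝ, ε₀ ≤ x → x ≤ 1 → 1 / 2 ≤ y → y ≤ 1 →
      β * (fQuad r lam x y * d / (1 + r) ^ 2 + d / 4) ≥
        β * d * Crl r lam / (1 + r) ^ 2 + 2 * Real.log 2 + 2 * β * v * d := by
  intro x y hxl hxu hyl hyu
  have hr0 : (0:ℝ) < r := by linarith
  have hrr : (0:ℝ) < 2 * r := by linarith
  have hlog : (0:ℝ) < Real.log 2 := Real.log_pos (by norm_num)
  have hβd : (0:ℝ) < β * d := mul_pos hβ0 hd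
  have hc0 : (0:ℝ) < c := by
    have h' : (0:ℝ) < 2 * Real.log 2 / (β * d) := div_pos (by linarith) hβd
    rw [hc]; linarith
  have h1r : (0:ℝ) < 1 + r := by linarith
  have hsq1r : (0:ℝ) < (1 + r) ^ 2 := pow_pos h1r 2
  set K := (1 + r) ^ 2 * c with hKdef
  have hK0 : 0 < K := by rw [hKdef]; exact mul_pos hsq1r hc0
  have hee : (r + 1) ^ 2 = (1 + r) ^ 2 := by ring
  -- the clipped case: ystar = 1
  have hy0 : 1 < (r + 1) / (2 * (r + lam)) := by
    by_contra h
    push_neg at h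
    apply hD0
    rw [hD, hystar, min_eq_left h]
    field_simp
    ring
  have hystar1 : ystar = 1 := by rw [hystar]; exact min_eq_right (le_of_lt hy0)
  have hclip : 0 < 1 - r - 2 * lam := by
    rw [lt_div_iff₀ (by linarith : (0:ℝ) < 2 * (r + lam))] at hy0
    linarith
  have h1l : (0:ℝ) < 1 - lam := by linarith
  -- m facts
  set m := min (r - 2 * r * lam - 1) (-lam * (1 + r) ^ 2 / (r + lam)) with hmdef
  have hrl0 : 0 < r * (-lam) := mul_pos hr0 (by linarith)
  have hm1 : m ≤ r - 2 * r * lam - 1 := min_le_left _ _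
  have hm0 : 0 < m := by
    apply lt_min
    · linarith [hrl0]
    · exact div_pos (mul_pos (by linarith : (0:ℝ) < -lam) hsq1r) h2
  have hε₀pos : 0 < ε₀ := by
    rw [hε₀]
    exact div_pos (mul_pos (by positivity : (0:ℝ) < 2 * (r + 1) ^ 2) hc0) hm0
  have hx0 : 0 < x := lt_of_lt_of_le hε₀pos hxl
  have hxK : 2 * K ≤ m * x := by
    rw [hε₀, div_le_iff₀ hm0] at hxl
    rw [hKdef, ← hee]
    linarith [hxl]
  -- condition (c), cleared
  have hden : (0:ℝ) < 8 * r ^ 2 * (1 - lam) ^ 2 := by positivity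
  have hcc' : 8 * r ^ 2 * (1 - lam) ^ 2 * K ≤ r * (r + lam) * m ^ 2 := by
    rw [le_div_iff₀ hden] at hcc
    rw [hKdef, ← hee]
    linarith [hcc]
  -- condition (b), cleared
  rw [min_eq_right (le_of_lt hy0)] at hb
  have hDneg : D < 0 := by
    have : D = r * (r + 2 * lam - 1) := by rw [hD, hystar1]; ring
    rw [this]; exact mul_neg_of_pos_of_neg hr0 (by linarith)
  have habs : |D| = r * (1 - r - 2 * lam) := by
    rw [abs_of_neg hDneg, hD, hystar1]; ring
  have hDabs0 : 0 < |D| := abs_pos.mpr hD0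
  have hbpos : 0 < 1 - (r + 1) / (2 * r) := by
    have hε₁0 : 0 ≤ ε₁ := by
      rw [hε₁]
      exact le_min (div_nonneg hK0.le (abs_nonneg D)) (Real.sqrt_nonneg _)
    linarith [lt_of_le_of_lt hε₁0 hb]
  have hb' : 2 * r * K < r * (1 - r - 2 * lam) * (r - 1) ∨
      8 * r * K < (r + lam) * (r - 1) ^ 2 := by
    rw [hε₁, min_lt_iff] at hb
    have e1 : 1 - (r + 1) / (2 * r) = (r - 1) / (2 * r) := by field_simp; ring
    rcases hb with h | h
    · left
      rw [e1, div_lt_div_iff₀ hDabs0 hrr, habs, hKdef] at h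
      rw [hKdef]
      linarith [h]
    · right
      rw [e1] at h
      have hq : 2 * (1 + r) ^ 2 * c / (r ^ 2 + r * lam) < ((r - 1) / (2 * r)) ^ 2 :=
        (Real.sqrt_lt' (by rw [← e1]; exact hbpos)).mp h
      have hr2l : (0:ℝ) < r ^ 2 + r * lam := by linarith [mul_pos hr0 h2]
      rw [div_pow, div_lt_div_iff₀ hr2l (by positivity : (0:ℝ) < ((2:ℝ) * r) ^ 2)] at hq
      rw [hKdef]
      refine lt_of_mul_lt_mul_right ?_ hr0.le
      linarith [hq]
  -- upper bound on Crl via the point (0,1)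
  have hCle : Crl r lam ≤ fQuad r lam 0 1 + (1 + r) ^ 2 / 4 := auxCrl r lam hr0 hlam
  have hmain := mainIneq r lam x y K m hr hlam h1 h2 hclip hm0 hm1 hK0 hxK hx0 hxu
    hyl hyu hcc' hb'
  -- final assembly
  have hdiff : 0 ≤ fQuad r lam x y + (1 + r) ^ 2 / 4 - (Crl r lam + K) := by linarith
  have h1r0 : (1 + r) ≠ 0 := ne_of_gt h1r
  have hbd : β * d * c = 2 * Real.log 2 + 2 * β * v * d := by
    rw [hc]; field_simp
  rw [ge_iff_le, ← sub_nonneg]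
  have e : β * (fQuad r lam x y * d / (1 + r) ^ 2 + d / 4)
      - (β * d * Crl r lam / (1 + r) ^ 2 + 2 * Real.log 2 + 2 * β * v * d)
      = β * d * (fQuad r lam x y + (1 + r) ^ 2 / 4 - (Crl r lam + K)) / (1 + r) ^ 2
        + (β * d * c - (2 * Real.log 2 + 2 * β * v * d)) := by
    rw [hKdef]; field_simp; ring
  rw [e, hbd]
  have hnn : 0 ≤ β * d * (fQuad r lam x y + (1 + r) ^ 2 / 4 - (Crl r lam + K)) / (1 + r) ^ 2 :=
    div_nonneg (mul_nonneg hβd.le hdiff) hsq1r.le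
  linarith
end

section
/- Fix real r ≥ 1, λ < 0 with 1 + rλ ≥ 0 and r + λ > 0, d > 0, and β with 0 < β ≤ 1. Define f(x,y) = rλ(x−y)² + (x + ry − (1+r)/2)², C(r,λ) = inf_{0≤x≤1, 0≤y≤1} f(x,y) + (1+r)²/4, y* = min{(r+1)/(2(r+λ)), 1}. Let v ∈ (0,1), set c = (2 log 2)/(βd) + 2v, and with D = 2(r²+rλ)y* − r² − r assumed nonzero define ε₁ = min{ (1+r)²c/|D| , √(2(1+r)²c/(r²+rλ)) }. Assume: (a) (r+1)²c < (1+r)²/4 − C(r,λ); (b) ε₁ < min{(r+1)/(2(r+λ)), 1} − (r+1)/(2r); (c) (r+1)²c ≤ (r²+rλ)·(min{r − 2rλ − 1, −λ(1+r)²/(r+λ)})² / (8r²(1−λ)²). Then for all x, y with 0 ≤ x ≤ 1, 1/2 ≤ y ≤ 1 and |y − y*| ≥ ε₁: β·( f(x,y)·d/(1+r)² + d/4 ) ≥ β·d·C(r,λ)/(1+r)² + 2 log 2 + 2βvd. -/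
set_option maxHeartbeats 1000000 in
lemma polyIneq (r lam : ℝ) (hr : 1 ≤ r) (hlam : lam < 0) (h1 : 0 ≤ 1 + r*lam)
    (h3 : r + 2*lam < 1) :
    (-lam)*(1+r)^2*(r - 2*r*lam - 1) ≤ 8*r*(1-lam)^2*(-(r*lam) - (r-1)^2/4) := by
  have hw : (0:ℝ) ≤ r - 1 := by linarith
  have hu : (0:ℝ) ≤ -lam := by linarith
  have hs : (0:ℝ) ≤ 1 - r - 2*lam := by linarith
  linarith [hu, sq_nonneg lam, mul_nonneg (mul_nonneg hu hu) hu,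
    mul_nonneg hw hu, mul_nonneg hw (sq_nonneg lam),
    mul_nonneg hw (mul_nonneg (mul_nonneg hu hu) hu),
    mul_nonneg (mul_nonneg hw hu) h1,
    mul_nonneg hs (mul_nonneg hw (by nlinarith [mul_nonneg hw hu, mul_nonneg hw (sq_nonneg lam)] : (0:ℝ) ≤ 2+2*(r-1)+4*(-lam)+5*(r-1)*(-lam)+4*(r-1)*lam^2))]

set_option maxHeartbeats 1000000 in
lemma keyIneq (r lam c x t : ℝ) (hr : 1 ≤ r) (hlam : lam < 0) (h1 : 0 ≤ 1 + r*lam)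
    (h2 : 0 < r + lam) (h21 : r + 2*lam < 1) (hc0 : 0 < c)
    (hx0 : 0 ≤ x) (hx1 : x ≤ 1) (ht2 : t ≤ 1/2)
    (hbase : (1+r)^2*c ≤ r*(1-r-2*lam)*t + (r^2+r*lam)*t^2)
    (hcc1 : (r+1)^2*c*(8*r^2*(1-lam)^2) ≤ (r^2+r*lam)*(r-2*r*lam-1)^2)
    (hcc2 : (r+1)^2*c*(8*r^2*(1-lam)^2) ≤ r*(-lam)*(1+r)^2*(r-2*r*lam-1)) :
    (1+r)^2*c ≤ (1+r*lam)*x^2 + ((r-2*r*lam-1) - (2*r-2*r*lam)*t)*x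
      + (r*(1-r-2*lam))*t + (r^2+r*lam)*t^2 := by
  have hr0 : (0:ℝ) < r := by linarith
  have hs : 0 < r^2 + r*lam := by
    rw [show r^2 + r*lam = r*(r+lam) by ring]; exact mul_pos hr0 h2
  have hDp : 0 < r*(1-r-2*lam) := mul_pos hr0 (by linarith)
  rcases le_or_gt ((2*r-2*r*lam)*t) (r-2*r*lam-1) with hcs | hcs
  · have hxterm : 0 ≤ ((r-2*r*lam-1) - (2*r-2*r*lam)*t)*x :=
      mul_nonneg (by linarith) hx0
    nlinarith [mul_nonneg h1 (sq_nonneg x)]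
  · have hK : 0 < 2*r - 2*r*lam := by nlinarith
    have hKtM : (2*r-2*r*lam)*t - (r-2*r*lam-1) ≤ 1+r*lam := by
      nlinarith [mul_le_mul_of_nonneg_left ht2 hK.le]
    have ha0 : 0 < 1+r*lam := lt_of_lt_of_le (by linarith) hKtM
    have hM1pos : 0 < r - 2*r*lam - 1 := by
      have := mul_pos hr0 (neg_pos.2 hlam); linarith
    have h1l : (0:ℝ) < 1 - lam := by linarith
    have hml : (0:ℝ) < -lam := by linarith
    have h8 : (0:ℝ) < 8*r^2*(1-lam)^2 :=
      mul_pos (by positivity) (pow_pos h1l 2)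
    have hpoly : (1+r)^2*c ≤ -(r*lam) - (r-1)^2/4 := by
      have hpl := polyIneq r lam hr hlam h1 h21
      have hpl' := mul_le_mul_of_nonneg_left hpl hr0.le
      nlinarith [hcc2, h8]
    have hq1 : 0 ≤ (r*(1-r-2*lam))*(r-2*r*lam-1)*(2*r-2*r*lam)
        + (r^2+r*lam)*(r-2*r*lam-1)^2 - ((1+r)^2*c)*(2*r-2*r*lam)^2 := by
      linarith [mul_nonneg (mul_nonneg hDp.le hM1pos.le) hK.le, hcc1,
        mul_nonneg hs.le (sq_nonneg (r-2*r*lam-1))]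
    have hq2 : 0 ≤ 4*(1+r*lam)*(-(r*lam) - (r-1)^2/4 - (1+r)^2*c) :=
      mul_nonneg (by linarith) (by linarith)
    have hT1 : 0 ≤ (1/2 - t) * ((1+r*lam) *
        ((r*(1-r-2*lam))*(r-2*r*lam-1)*(2*r-2*r*lam)
        + (r^2+r*lam)*(r-2*r*lam-1)^2 - ((1+r)^2*c)*(2*r-2*r*lam)^2)) :=
      mul_nonneg (by linarith) (mul_nonneg ha0.le hq1)
    have hT2 : 0 ≤ ((2*r-2*r*lam)*t - (r-2*r*lam-1)) * ((2*r-2*r*lam) *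
        (4*(1+r*lam)*(-(r*lam) - (r-1)^2/4 - (1+r)^2*c))) :=
      mul_nonneg (by linarith) (mul_nonneg hK.le hq2)
    have hT3 : 0 ≤ (((2*r-2*r*lam)*t - (r-2*r*lam-1)) * (1/2 - t))
        * ((4*r*(-lam)*(1+r)^2) * (1+r*lam)) := by
      apply mul_nonneg (mul_nonneg (by linarith) (by linarith))
      exact mul_nonneg (mul_nonneg (mul_nonneg (by norm_num : (0:ℝ) ≤ 4) hr0.le |>.trans_eq rfl |> fun h => mul_nonneg h hml.le) (sq_nonneg (1+r))) ha0.le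
    have hprod : 0 ≤ ((1+r*lam)*(2*r-2*r*lam)) *
        (4*(1+r*lam)*((r*(1-r-2*lam))*t + (r^2+r*lam)*t^2 - (1+r)^2*c)
          - ((2*r-2*r*lam)*t - (r-2*r*lam-1))^2) := by
      linarith [hT1, hT2, hT3]
    have hQTnn : 0 ≤ 4*(1+r*lam)*((r*(1-r-2*lam))*t + (r^2+r*lam)*t^2 - (1+r)^2*c)
        - ((2*r-2*r*lam)*t - (r-2*r*lam-1))^2 :=
      nonneg_of_mul_nonneg_right hprod (mul_pos ha0 hK)
    have hprod2 : 0 ≤ (4*(1+r*lam)) *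
        ((1+r*lam)*x^2 + ((r-2*r*lam-1) - (2*r-2*r*lam)*t)*x
          + (r*(1-r-2*lam))*t + (r^2+r*lam)*t^2 - (1+r)^2*c) := by
      linarith [hQTnn, sq_nonneg (2*(1+r*lam)*x + ((r-2*r*lam-1) - (2*r-2*r*lam)*t))]
    have hG := nonneg_of_mul_nonneg_right hprod2 (by linarith : (0:ℝ) < 4*(1+r*lam))
    linarith

set_option maxHeartbeats 1000000 in
/-- Proposition 2, conclusion 1, second implication: if `0 ≤ x ≤ 1`,
`1/2 ≤ y ≤ 1` and `|y - y*| ≥ ε₁` then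
`β(f(x,y)·d/(1+r)² + d/4) ≥ βdC(r,λ)/(1+r)² + 2log2 + 2βvd`. -/
theorem stmt12 (r lam d β v c ε₁ D ystar : ℝ)
    (hr : 1 ≤ r) (hlam : lam < 0) (h1 : 0 ≤ 1 + r * lam) (h2 : 0 < r + lam)
    (hd : 0 < d) (hβ0 : 0 < β) (hβ1 : β ≤ 1) (hv0 : 0 < v) (hv1 : v < 1)
    (hystar : ystar = min ((r + 1) / (2 * (r + lam))) 1)
    (hc : c = 2 * Real.log 2 / (β * d) + 2 * v)
    (hD : D = 2 * (r ^ 2 + r * lam) * ystar - r ^ 2 - r) (hD0 : D ≠ 0)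
    (hε₁ : ε₁ = min ((1 + r) ^ 2 * c / |D|)
      (Real.sqrt (2 * (1 + r) ^ 2 * c / (r ^ 2 + r * lam))))
    (ha : (r + 1) ^ 2 * c < (1 + r) ^ 2 / 4 - Crl r lam)
    (hb : ε₁ < min ((r + 1) / (2 * (r + lam))) 1 - (r + 1) / (2 * r))
    (hcc : (r + 1) ^ 2 * c ≤ (r ^ 2 + r * lam) *
      (min (r - 2 * r * lam - 1) (-lam * (1 + r) ^ 2 / (r + lam))) ^ 2 /
      (8 * r ^ 2 * (1 - lam) ^ 2)) :
    ∀ x y : ℝ, 0 ≤ x → x ≤ 1 → 1 / 2 ≤ y → y ≤ 1 → ε₁ ≤ |y - ystar| →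
      β * (fQuad r lam x y * d / (1 + r) ^ 2 + d / 4) ≥
        β * d * Crl r lam / (1 + r) ^ 2 + 2 * Real.log 2 + 2 * β * v * d := by
  have hr0 : (0:ℝ) < r := by linarith
  have hlog : (0:ℝ) < Real.log 2 := Real.log_pos (by norm_num)
  have hc0 : 0 < c := by rw [hc]; positivity
  have hs : 0 < r^2 + r*lam := by
    rw [show r^2 + r*lam = r*(r+lam) by ring]; exact mul_pos hr0 h2
  have hrlne : r + lam ≠ 0 := h2.ne'
  have hmin : 1 < (r+1)/(2*(r+lam)) := by
    by_contra hcon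
    push_neg at hcon
    apply hD0
    rw [hD, hystar, min_eq_left hcon]
    field_simp
    ring
  have hys : ystar = 1 := by rw [hystar, min_eq_right hmin.le]
  have h2' : (0:ℝ) < 2*(r+lam) := by linarith
  have h21 : r + 2*lam < 1 := by
    have := (one_lt_div h2').mp hmin
    linarith
  have hDval : D = r^2 + 2*r*lam - r := by rw [hD, hys]; ring
  have hDneg : D < 0 := by
    rw [hDval, show r^2 + 2*r*lam - r = r*(r+2*lam-1) by ring]
    exact mul_neg_of_pos_of_neg hr0 (by linarith)
  have habs : |D| = r*(1-r-2*lam) := by rw [abs_of_neg hDneg, hDval]; ring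
  have hDp : 0 < r*(1-r-2*lam) := mul_pos hr0 (by linarith)
  have hP : 0 < (1+r)^2*c := mul_pos (pow_pos (by linarith : (0:ℝ) < 1+r) 2) hc0
  have h8 : (0:ℝ) < 8*r^2*(1-lam)^2 :=
    mul_pos (mul_pos (by norm_num) (pow_pos hr0 2)) (pow_pos (by linarith : (0:ℝ) < 1-lam) 2)
  -- process hcc
  have hM1pos : 0 < r - 2*r*lam - 1 := by
    have := mul_pos hr0 (neg_pos.2 hlam); linarith
  clear hb ha
  have hM2pos : 0 < -lam*(1+r)^2/(r+lam) := by
    exact div_pos (mul_pos (neg_pos.2 hlam) (pow_pos (by linarith : (0:ℝ) < 1+r) 2)) h2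
  have hMpos : 0 < min (r-2*r*lam-1) (-lam*(1+r)^2/(r+lam)) := lt_min hM1pos hM2pos
  have hcc' : (r+1)^2*c*(8*r^2*(1-lam)^2) ≤ (r^2+r*lam) *
      (min (r-2*r*lam-1) (-lam*(1+r)^2/(r+lam)))^2 := (le_div_iff₀ h8).mp hcc
  have hMsq1 : (min (r-2*r*lam-1) (-lam*(1+r)^2/(r+lam)))^2 ≤ (r-2*r*lam-1)^2 :=
    pow_le_pow_left₀ hMpos.le (min_le_left _ _) 2
  have hMsq2 : (min (r-2*r*lam-1) (-lam*(1+r)^2/(r+lam)))^2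
      ≤ (r-2*r*lam-1)*(-lam*(1+r)^2/(r+lam)) := by
    rw [sq]
    exact mul_le_mul (min_le_left _ _) (min_le_right _ _) hMpos.le hM1pos.le
  have hcc1 : (r+1)^2*c*(8*r^2*(1-lam)^2) ≤ (r^2+r*lam)*(r-2*r*lam-1)^2 :=
    le_trans hcc' (mul_le_mul_of_nonneg_left hMsq1 hs.le)
  have hcc2 : (r+1)^2*c*(8*r^2*(1-lam)^2) ≤ r*(-lam)*(1+r)^2*(r-2*r*lam-1) := by
    refine le_trans (le_trans hcc' (mul_le_mul_of_nonneg_left hMsq2 hs.le)) (le_of_eq ?_)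
    field_simp
  intro x y hx0 hx1 hy2 hy1 hyd
  have habsy : |y - ystar| = 1 - y := by
    rw [hys, abs_of_nonpos (by linarith)]; ring
  rw [habsy] at hyd
  -- base bound from ε₁ ≤ 1 - y
  have hbase : (1+r)^2*c ≤ r*(1-r-2*lam)*(1-y) + (r^2+r*lam)*(1-y)^2 := by
    rcases le_total ((1 + r) ^ 2 * c / |D|)
        (Real.sqrt (2 * (1 + r) ^ 2 * c / (r ^ 2 + r * lam))) with hm | hm
    · have hA : (1+r)^2*c/|D| ≤ 1-y := by
        rw [hε₁, min_eq_left hm] at hyd; exact hyd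
      rw [habs] at hA
      have h' := (div_le_iff₀ hDp).mp hA
      have h'' : 0 ≤ (r^2+r*lam)*(1-y)^2 := mul_nonneg hs.le (sq_nonneg _)
      linarith only [h', h'']
    · have hB : Real.sqrt (2*(1+r)^2*c/(r^2+r*lam)) ≤ 1-y := by
        rw [hε₁, min_eq_right hm] at hyd; exact hyd
      have h0B : 0 ≤ Real.sqrt (2*(1+r)^2*c/(r^2+r*lam)) := Real.sqrt_nonneg _
      have ht0 : 0 ≤ 1-y := le_trans h0B hB
      have hsq : Real.sqrt (2*(1+r)^2*c/(r^2+r*lam))^2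
          = 2*(1+r)^2*c/(r^2+r*lam) := Real.sq_sqrt (by positivity)
      have h' : 2*(1+r)^2*c/(r^2+r*lam) ≤ (1-y)^2 := by
        rw [← hsq]; exact pow_le_pow_left₀ h0B hB 2
      have h'' := (div_le_iff₀ hs).mp h'
      have h''' : 0 ≤ r*(1-r-2*lam)*(1-y) := mul_nonneg hDp.le ht0
      linarith only [h'', h''', hP]
  have hkey := keyIneq r lam c x (1-y) hr hlam h1 h2 h21 hc0 hx0 hx1
    (by linarith) hbase hcc1 hcc2
  have hid : fQuad r lam x y - fQuad r lam 0 1 =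
      (1+r*lam)*x^2 + ((r-2*r*lam-1) - (2*r-2*r*lam)*(1-y))*x
      + (r*(1-r-2*lam))*(1-y) + (r^2+r*lam)*(1-y)^2 := by
    unfold fQuad; ring
  have key : fQuad r lam 0 1 + (1+r)^2*c ≤ fQuad r lam x y := by
    linarith only [hkey, hid]
  -- upper bound on Crl
  have hCle : Crl r lam ≤ fQuad r lam 0 1 + (1+r)^2/4 := by
    apply csInf_le
    · refine ⟨r*lam, ?_⟩
      rintro z ⟨x', y', hx0', hx1', hy0', hy1', rfl⟩
      have hxy : (x'-y')^2 ≤ 1 := by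
        have := sq_le_sq' (by linarith : -(1:ℝ) ≤ x'-y') (by linarith : x'-y' ≤ 1)
        simpa using this
      have hnn : 0 ≤ (-(r*lam))*(1-(x'-y')^2) :=
        mul_nonneg (by have := mul_pos hr0 (neg_pos.2 hlam); linarith only [this])
          (by linarith only [hxy])
      have hq : (0:ℝ) ≤ (x'+r*y'-(1+r)/2)^2 := sq_nonneg _
      have hq2 : (0:ℝ) ≤ (1+r)^2/4 := by positivity
      unfold fQuad
      linarith only [hnn, hq, hq2]
    · exact ⟨0, 1, le_refl 0, zero_le_one, zero_le_one, le_refl 1, rfl⟩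
  -- conclude
  have h1r2 : (0:ℝ) < (1+r)^2 := by positivity
  rw [ge_iff_le, ← sub_nonneg]
  have hrewrite : β*(fQuad r lam x y*d/(1+r)^2 + d/4)
      - (β*d*Crl r lam/(1+r)^2 + 2*Real.log 2 + 2*β*v*d)
      = (β*d/(1+r)^2) * ((fQuad r lam x y + (1+r)^2/4) - (Crl r lam + (1+r)^2*c)) := by
    rw [hc]
    field_simp
    ring
  rw [hrewrite]
  exact mul_nonneg (by positivity) (by linarith only [key, hCle])
end

section
/- Fix integers n ≥ 3 and k with 3 ≤ k ≤ n, and reals d > 0, r > 0, λ with d(1+rλ)/n, d(1−λ)/n, d(1+λ/r)/n all in [0,1]. Consider the random graph G on vertex set {1,…,n} generated as follows: labels σ_u ∈ {0,1}, u = 1,…,n, are i.i.d. with P(σ_u = 0) = 1/(1+r) and P(σ_u = 1) = r/(1+r); conditionally on the labels, the edge indicators X_{uv} for u < v are independent Bernoulli with parameter α_{σ_u σ_v}/n, where α₀₀ = d(1+rλ), α₀₁ = α₁₀ = d(1−λ), α₁₁ = d(1+λ/r). Let C_k be the number of cycles of length k in G, i.e., C_k = (1/(2k))·Σ over injective maps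 u : ℤ/kℤ → {1,…,n} of ∏_{i=0}^{k−1} X_{u(i)u(i+1)}. Then E[C_k] = binom(n,k)·(k−1)!/2 · (d/n)^k · (1 + λ^k). -/
/-!
Fix an injective closed walk `u` of length `k ≥ 3`. Its `k` edges are distinct, so given the labels
`σ` the edge indicators along it are independent and their product has expectation
`∏ α (σ uᵢ) (σ uᵢ₊₁) / n`. The labels of the `k` distinct vertices are i.i.d. with law `π`, so
averaging over them gives `∑ τ, ∏ π τᵢ α τᵢ τᵢ₊₁ / n = tr (M ^ k)` with `M b c = π b α b c / n`.
Now `M = (d / n) P + (d λ / n) (1 - P)`, where `P b c = π b` is an idempotent of trace `1`, hence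
`tr (M ^ k) = (d / n) ^ k (1 + λ ^ k)`. Finally there are `k! C(n, k)` injective walks.
-/

noncomputable section

/-- The `{0,1}`-valued edge indicator `X_{uv}` (as a real number) read off
from the family `ω` of edge indicators indexed by ordered pairs `u < v`. -/
def edgeInd {n : ℕ} (ω : {p : Fin n × Fin n // p.1 < p.2} → Bool)
    (u v : Fin n) : ℝ :=
  if h : u < v then (if ω ⟨(u, v), h⟩ then 1 else 0)
  else if h' : v < u then (if ω ⟨(v, u), h'⟩ then 1 else 0)
  else 0

open Finset

lemma sum_prod_bernoulli_mul_prod_indicator {ι : Type*} [Fintype ι] [DecidableEq ι]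
    (q : ι → ℝ) (E : Finset ι) :
    ∑ ω : ι → Bool, (∏ p, if ω p then q p else 1 - q p) * ∏ p ∈ E, (if ω p then (1 : ℝ) else 0)
      = ∏ p ∈ E, q p := by
  let f : ι → Bool → ℝ := fun p b =>
    (if b then q p else 1 - q p) * if p ∈ E then (if b then 1 else 0) else 1
  calc _ = ∑ ω : ι → Bool, ∏ p, f p (ω p) := by
        refine sum_congr rfl fun ω _ => ?_
        rw [prod_mul_distrib, prod_ite_mem, univ_inter]
    _ = ∏ p, ∑ b, f p b := (Fintype.prod_sum f).symm
    _ = ∏ p, if p ∈ E then q p else 1 := by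
        refine prod_congr rfl fun p _ => ?_
        by_cases hp : p ∈ E <;> simp [f, hp]
    _ = ∏ p ∈ E, q p := by rw [prod_ite_mem, univ_inter]

section Edges

variable {n : ℕ}

def sortedPair (a b : Fin n) (hab : a ≠ b) : {p : Fin n × Fin n // p.1 < p.2} :=
  if h : a < b then ⟨(a, b), h⟩ else ⟨(b, a), lt_of_le_of_ne (not_lt.mp h) hab.symm⟩

lemma edgeInd_eq_ite (ω : {p : Fin n × Fin n // p.1 < p.2} → Bool) {a b : Fin n}
    (hab : a ≠ b) : edgeInd ω a b = if ω (sortedPair a b hab) then 1 else 0 := by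
  unfold edgeInd sortedPair
  rcases hab.lt_or_gt with h | h
  · rw [dif_pos h, dif_pos h]
  · rw [dif_neg h.not_gt, dif_pos h, dif_neg h.not_gt]

lemma sortedPair_eq_sortedPair {a b c e : Fin n} {hab : a ≠ b} {hce : c ≠ e}
    (h : sortedPair a b hab = sortedPair c e hce) :
    (a = c ∧ b = e) ∨ (a = e ∧ b = c) := by
  unfold sortedPair at h
  split_ifs at h <;> simp only [Subtype.mk.injEq, Prod.mk.injEq] at h <;> tauto

lemma apply_sortedPair {β : Fin n → Fin n → ℝ} (hβ : ∀ a b, β a b = β b a) {a b : Fin n}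
    (hab : a ≠ b) : β (sortedPair a b hab).1.1 (sortedPair a b hab).1.2 = β a b := by
  unfold sortedPair
  split_ifs
  · rfl
  · exact hβ b a

end Edges

section Cycles

variable {k : ℕ} [NeZero k]

lemma Fin.add_one_ne_self (hk : 2 ≤ k) (i : Fin k) : i + 1 ≠ i := by
  rw [Ne, add_eq_left, Fin.ext_iff, Fin.val_one', Fin.val_zero, Nat.mod_eq_of_lt hk]
  exact one_ne_zero

lemma Fin.add_one_add_one_ne_self (hk : 3 ≤ k) (i : Fin k) : i + 1 + 1 ≠ i := by
  rw [Ne, add_assoc, add_eq_left, Fin.ext_iff, Fin.val_add, Fin.val_one', Fin.val_zero,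
    Nat.mod_eq_of_lt (by omega : 1 < k), Nat.mod_eq_of_lt hk]
  exact two_ne_zero

lemma apply_ne_apply_add_one {α : Type*} {u : Fin k → α} (hk : 2 ≤ k) (hu : Function.Injective u) (i : Fin k) :
    u i ≠ u (i + 1) :=
  fun h => Fin.add_one_ne_self hk i (hu h).symm

variable {n : ℕ}

def cycleEdge (hk : 2 ≤ k) (u : Fin k → Fin n) (hu : Function.Injective u) (i : Fin k) :
    {p : Fin n × Fin n // p.1 < p.2} :=
  sortedPair (u i) (u (i + 1)) (apply_ne_apply_add_one hk hu i)

-- For `k = 2` the closed walk `a, b` traverses the edge `{a, b}` twice.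
lemma cycleEdge_injective (hk : 3 ≤ k) {u : Fin k → Fin n} (hu : Function.Injective u) :
    Function.Injective (cycleEdge (by omega) u hu) := by
  intro i j hij
  rcases sortedPair_eq_sortedPair hij with ⟨h, -⟩ | ⟨h₁, h₂⟩
  · exact hu h
  · have hi : i = j + 1 := hu h₁
    have hj : i + 1 = j := hu h₂
    exact absurd (hi ▸ hj) (Fin.add_one_add_one_ne_self hk j)

lemma sum_prod_bernoulli_mul_prod_edgeInd_cycle (hk : 3 ≤ k) {u : Fin k → Fin n}
    (hu : Function.Injective u) {β : Fin n → Fin n → ℝ} (hβ : ∀ a b, β a b = β b a) :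
    ∑ ω : {p : Fin n × Fin n // p.1 < p.2} → Bool,
      (∏ p, if ω p then β p.1.1 p.1.2 else 1 - β p.1.1 p.1.2) *
        ∏ i, edgeInd ω (u i) (u (i + 1))
      = ∏ i, β (u i) (u (i + 1)) := by
  have he := cycleEdge_injective hk hu
  have hindicator : ∀ ω, ∏ i, edgeInd ω (u i) (u (i + 1))
      = ∏ p ∈ univ.image (cycleEdge _ u hu), if ω p then 1 else 0 := fun ω => by
    rw [prod_image he.injOn]
    exact prod_congr rfl fun i _ => edgeInd_eq_ite ω _
  simp only [hindicator]
  rw [sum_prod_bernoulli_mul_prod_indicator, prod_image he.injOn]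
  exact prod_congr rfl fun i _ => apply_sortedPair hβ _

end Cycles

lemma sum_prod_mul_comp_inl {ι κ S : Type*} [Fintype ι] [Fintype κ] [Fintype S]
    [DecidableEq ι] [DecidableEq κ] {π : S → ℝ} (hπ : ∑ s, π s = 1) (F : (ι → S) → ℝ) :
    ∑ σ : ι ⊕ κ → S, (∏ x, π (σ x)) * F (σ ∘ Sum.inl)
      = ∑ τ : ι → S, (∏ i, π (τ i)) * F τ := by
  have hρ : ∑ ρ : κ → S, ∏ c, π (ρ c) = 1 := by
    rw [← Fintype.prod_sum (fun _ => π), hπ, prod_const_one]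
  rw [← (Equiv.sumArrowEquivProdArrow ι κ S).symm.sum_comp, Fintype.sum_prod_type]
  refine sum_congr rfl fun τ _ => ?_
  have hτ : ∀ ρ, (Equiv.sumArrowEquivProdArrow ι κ S).symm (τ, ρ) ∘ Sum.inl = τ := fun _ => rfl
  simp only [Fintype.prod_sum_type, Equiv.sumArrowEquivProdArrow_symm_apply_inl,
    Equiv.sumArrowEquivProdArrow_symm_apply_inr, hτ]
  rw [← sum_mul, ← mul_sum, hρ, mul_one]

lemma sum_prod_mul_comp_of_injective {ι V S : Type*} [Fintype ι] [Fintype V]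
    [Fintype S] [DecidableEq ι] [DecidableEq V] {π : S → ℝ} (hπ : ∑ s, π s = 1)
    {u : ι → V} (hu : Function.Injective u) (F : (ι → S) → ℝ) :
    ∑ σ : V → S, (∏ v, π (σ v)) * F (σ ∘ u)
      = ∑ τ : ι → S, (∏ i, π (τ i)) * F τ := by
  classical
  let e : ι ⊕ ↥(Set.range u)ᶜ ≃ V :=
    ((Equiv.ofInjective u hu).sumCongr (Equiv.refl _)).trans (Equiv.Set.sumCompl _)
  rw [← sum_prod_mul_comp_inl (κ := ↥(Set.range u)ᶜ) hπ F,
    ← (e.arrowCongr (Equiv.refl S)).sum_comp]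
  have hu_e : ∀ i, e.symm (u i) = Sum.inl i := fun i => e.symm_apply_eq.mpr rfl
  refine sum_congr rfl fun σ _ => ?_
  rw [← e.prod_comp]
  simp [Function.comp_def, hu_e]

section Trace

variable {S R : Type*} [Fintype S] [DecidableEq S] [CommSemiring R] (M : Matrix S S R)

lemma sum_prod_path_mul (m : ℕ) (g : S → S → R) :
    ∑ τ : Fin (m + 1) → S,
      (∏ i : Fin m, M (τ i.castSucc) (τ i.succ)) * g (τ 0) (τ (Fin.last m))
      = ∑ a, ∑ b, (M ^ m) a b * g a b := by
  induction m generalizing g with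
  | zero =>
    rw [Fintype.sum_equiv (Equiv.funUnique (Fin 1) S) _ (fun a => g a a) (fun τ => by simp)]
    simp [Matrix.one_apply]
  | succ m ih =>
    have hcons : ∀ (a : S) (σ : Fin (m + 1) → S),
        (∏ i : Fin (m + 1), M ((Fin.cons a σ : Fin (m + 2) → S) i.castSucc)
            ((Fin.cons a σ : Fin (m + 2) → S) i.succ)) *
          g a ((Fin.cons a σ : Fin (m + 2) → S) (Fin.last (m + 1)))
          = (∏ i : Fin m, M (σ i.castSucc) (σ i.succ)) * (M a (σ 0) * g a (σ (Fin.last m))) := by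
      intro a σ
      rw [Fin.prod_univ_succ, ← Fin.succ_last, Fin.cons_succ]
      simp only [Fin.castSucc_zero, Fin.cons_zero, Fin.cons_succ, ← Fin.succ_castSucc]
      ring
    rw [← (Fin.consEquiv fun _ => S).sum_comp, Fintype.sum_prod_type]
    simp only [Fin.consEquiv_apply, Fin.cons_zero, hcons]
    refine sum_congr rfl fun a _ => ?_
    rw [ih fun b c => M a b * g a c]
    simp only [pow_succ', Matrix.mul_apply, sum_mul]
    rw [sum_comm]
    refine sum_congr rfl fun b _ => sum_congr rfl fun c _ => by ring

lemma sum_prod_cycle_eq_trace_pow {k : ℕ} [NeZero k] :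
    ∑ τ : Fin k → S, ∏ i, M (τ i) (τ (i + 1)) = (M ^ k).trace := by
  obtain ⟨m, rfl⟩ : ∃ m, k = m + 1 := ⟨k - 1, (Nat.succ_pred_eq_of_ne_zero (NeZero.ne k)).symm⟩
  have hcycle : ∀ τ : Fin (m + 1) → S, ∏ i, M (τ i) (τ (i + 1))
      = (∏ i : Fin m, M (τ i.castSucc) (τ i.succ)) * M (τ (Fin.last m)) (τ 0) := fun τ => by
    simp only [Fin.prod_univ_castSucc, Fin.coeSucc_eq_succ, Fin.last_add_one]
  simp only [hcycle, pow_succ, Matrix.trace, Matrix.diag, Matrix.mul_apply]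
  exact sum_prod_path_mul M m fun a b => M b a

end Trace

lemma Matrix.isIdempotentElem_replicateCol {S R : Type*} [Fintype S] [CommSemiring R]
    {π : S → R} (hπ : ∑ s, π s = 1) :
    IsIdempotentElem (Matrix.replicateCol S π) := by
  ext i j
  simp [Matrix.mul_apply, ← mul_sum, hπ]

theorem IsIdempotentElem.smul_add_smul_one_sub_pow {R A : Type*} [CommSemiring R] [Ring A]
    [Algebra R A] {e : A} (he : IsIdempotentElem e) (a b : R) (k : ℕ) :
    (a • e + b • (1 - e)) ^ k = a ^ k • e + b ^ k • (1 - e) := by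
  induction k with
  | zero => simp
  | succ k ih =>
    rw [pow_succ, ih]
    simp only [add_mul, mul_add, smul_mul_smul, he.eq, he.one_sub.eq, he.mul_one_sub_self,
      he.one_sub_mul_self, smul_zero, add_zero, zero_add, pow_succ]

lemma Matrix.trace_pow_smul_replicateCol_add_smul_one_sub {S R : Type*} [Fintype S]
    [DecidableEq S] [CommRing R] {π : S → R} (hπ : ∑ s, π s = 1) (a b : R) (k : ℕ) :
    ((a • Matrix.replicateCol S π + b • (1 - Matrix.replicateCol S π)) ^ k).trace
      = a ^ k + (Fintype.card S - 1) * b ^ k := by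
  rw [(Matrix.isIdempotentElem_replicateCol hπ).smul_add_smul_one_sub_pow, Matrix.trace_add,
    Matrix.trace_smul, Matrix.trace_smul, Matrix.trace_sub, Matrix.trace_one]
  have htr : (Matrix.replicateCol S π).trace = 1 := hπ
  rw [htr, smul_eq_mul, smul_eq_mul]
  ring

section SBM

variable {d r lam : ℝ} {π : Fin 2 → ℝ} {α : Fin 2 → Fin 2 → ℝ}

lemma sbm_weightedMatrix_eq (hr : 0 < r) (hπ : π = ![1 / (1 + r), r / (1 + r)])
    (hα : α = ![![d * (1 + r * lam), d * (1 - lam)], ![d * (1 - lam), d * (1 + lam / r)]])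
    (x : ℝ) :
    Matrix.of (fun b c => π b * α b c / x)
      = (d / x) • Matrix.replicateCol (Fin 2) π
        + (d * lam / x) • (1 - Matrix.replicateCol (Fin 2) π) := by
  have hr1 : 1 + r ≠ 0 := by positivity
  ext b c
  simp only [Matrix.of_apply, Matrix.add_apply, Matrix.smul_apply, Matrix.sub_apply,
    Matrix.replicateCol_apply, Matrix.one_apply, smul_eq_mul]
  subst hπ hα
  fin_cases b <;> fin_cases c <;>
    · simp
      field_simp
      ring

lemma sbm_expectation_prod_edgeInd_cycle {n k : ℕ} [NeZero k] (hk : 3 ≤ k) (hr : 0 < r)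
    (hπ : π = ![1 / (1 + r), r / (1 + r)])
    (hα : α = ![![d * (1 + r * lam), d * (1 - lam)], ![d * (1 - lam), d * (1 + lam / r)]])
    {u : Fin k → Fin n} (hu : Function.Injective u) :
    ∑ σ : Fin n → Fin 2, (∏ v, π (σ v)) *
      ∑ ω : {p : Fin n × Fin n // p.1 < p.2} → Bool,
        (∏ p, if ω p then α (σ p.1.1) (σ p.1.2) / n else 1 - α (σ p.1.1) (σ p.1.2) / n) *
          ∏ i, edgeInd ω (u i) (u (i + 1))
      = (d / n) ^ k * (1 + lam ^ k) := by
  have hπ1 : ∑ s, π s = 1 := by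
    have hr1 : 1 + r ≠ 0 := by positivity
    simp [hπ]
    field_simp
  have hα_symm : ∀ a b, α a b = α b a := by
    intro a b
    fin_cases a <;> fin_cases b <;> simp [hα]
  calc _ = ∑ σ : Fin n → Fin 2, (∏ v, π (σ v)) * ∏ i, α (σ (u i)) (σ (u (i + 1))) / n :=
        sum_congr rfl fun σ _ => by
          rw [sum_prod_bernoulli_mul_prod_edgeInd_cycle hk hu
            (β := fun a b => α (σ a) (σ b) / n) fun a b => by rw [hα_symm]]
    _ = ∑ τ : Fin k → Fin 2, (∏ i, π (τ i)) * ∏ i, α (τ i) (τ (i + 1)) / n :=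
        sum_prod_mul_comp_of_injective hπ1 hu fun τ => ∏ i, α (τ i) (τ (i + 1)) / n
    _ = ∑ τ : Fin k → Fin 2, ∏ i, Matrix.of (fun b c => π b * α b c / n) (τ i) (τ (i + 1)) := by
        simp only [← prod_mul_distrib, Matrix.of_apply, mul_div_assoc]
    _ = (d / n) ^ k * (1 + lam ^ k) := by
        rw [sum_prod_cycle_eq_trace_pow, sbm_weightedMatrix_eq hr hπ hα,
          Matrix.trace_pow_smul_replicateCol_add_smul_one_sub hπ1]
        simp only [Fintype.card_fin]
        ring

end SBM

lemma card_filter_injective {α β : Type*} [Fintype α] [Fintype β] [DecidableEq α]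
    [DecidableEq β] :
    #(univ.filter fun u : α → β => Function.Injective u)
      = (Fintype.card β).descFactorial (Fintype.card α) := by
  rw [← Fintype.card_subtype, Fintype.card_congr (Equiv.subtypeInjectiveEquivEmbedding α β),
    Fintype.card_embedding_eq]

lemma sum_sum_mul_mul_sum_comm {X Y U : Type*} [Fintype X] [Fintype Y] (s : Finset U)
    (A : X → ℝ) (B : X → Y → ℝ) (c : ℝ) (f : Y → U → ℝ) :
    ∑ x, ∑ y, (A x * B x y) * (c * ∑ u ∈ s, f y u)
      = c * ∑ u ∈ s, ∑ x, A x * ∑ y, B x y * f y u := by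
  calc _ = ∑ x, ∑ y, ∑ u ∈ s, c * (A x * (B x y * f y u)) :=
        sum_congr rfl fun x _ => sum_congr rfl fun y _ => by
          rw [mul_sum, mul_sum]
          exact sum_congr rfl fun u _ => by ring
    _ = ∑ u ∈ s, ∑ x, ∑ y, c * (A x * (B x y * f y u)) := by
        simp only [sum_comm (s := s)]
    _ = _ := by simp only [mul_sum]

theorem stmt17_general (n k : ℕ) [NeZero k] (hk3 : 3 ≤ k)
    (d r lam : ℝ) (hr : 0 < r)
    (π : Fin 2 → ℝ) (hπ : π = ![1 / (1 + r), r / (1 + r)])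
    (α : Fin 2 → Fin 2 → ℝ)
    (hα : α = ![![d * (1 + r * lam), d * (1 - lam)],
                ![d * (1 - lam), d * (1 + lam / r)]]) :
    ∑ σ : Fin n → Fin 2, ∑ ω : {p : Fin n × Fin n // p.1 < p.2} → Bool,
      ((∏ u : Fin n, π (σ u)) *
        ∏ p : {p : Fin n × Fin n // p.1 < p.2},
          (if ω p then α (σ p.1.1) (σ p.1.2) / n
           else 1 - α (σ p.1.1) (σ p.1.2) / n)) *
      (1 / (2 * (k : ℝ)) *
        ∑ u ∈ Finset.univ.filter (fun u : Fin k → Fin n => Function.Injective u),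
          ∏ i : Fin k, edgeInd ω (u i) (u (i + 1)))
      = (n.choose k : ℝ) * ((k - 1).factorial : ℝ) / 2 * (d / n) ^ k *
          (1 + lam ^ k) := by
  rw [sum_sum_mul_mul_sum_comm, sum_congr rfl fun u hu =>
      sbm_expectation_prod_edgeInd_cycle hk3 hr hπ hα (mem_filter.mp hu).2,
    sum_const, card_filter_injective, Fintype.card_fin, Fintype.card_fin,
    Nat.descFactorial_eq_factorial_mul_choose, ← Nat.mul_factorial_pred (NeZero.ne k),
    nsmul_eq_mul]
  have hk : (k : ℝ) ≠ 0 := by positivity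
  push_cast
  field_simp

/-- Proposition 1 (core computation): in the two-community sparse SBM
`SBM(d,λ,r,n)` the expected number of `k`-cycles equals
`C(n,k)·(k-1)!/2 · (d/n)^k · (1+λ^k)`.  The random graph is modelled
canonically: labels `σ : Fin n → Fin 2` carry weight `∏ π(σ u)` and,
conditionally on `σ`, edge indicators are independent Bernoulli with
parameters `α_{σu σv}/n`. -/
theorem stmt17 (n k : ℕ) [NeZero k] (hn : 3 ≤ n) (hk3 : 3 ≤ k) (hkn : k ≤ n)
    (d r lam : ℝ) (hd : 0 < d) (hr : 0 < r)
    (h00 : d * (1 + r * lam) / n ∈ Set.Icc (0 : ℝ) 1)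
    (h01 : d * (1 - lam) / n ∈ Set.Icc (0 : ℝ) 1)
    (h11 : d * (1 + lam / r) / n ∈ Set.Icc (0 : ℝ) 1)
    (π : Fin 2 → ℝ) (hπ : π = ![1 / (1 + r), r / (1 + r)])
    (α : Fin 2 → Fin 2 → ℝ)
    (hα : α = ![![d * (1 + r * lam), d * (1 - lam)],
                ![d * (1 - lam), d * (1 + lam / r)]]) :
    ∑ σ : Fin n → Fin 2, ∑ ω : {p : Fin n × Fin n // p.1 < p.2} → Bool,
      ((∏ u : Fin n, π (σ u)) *
        ∏ p : {p : Fin n × Fin n // p.1 < p.2},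
          (if ω p then α (σ p.1.1) (σ p.1.2) / n
           else 1 - α (σ p.1.1) (σ p.1.2) / n)) *
      (1 / (2 * (k : ℝ)) *
        ∑ u ∈ Finset.univ.filter (fun u : Fin k → Fin n => Function.Injective u),
          ∏ i : Fin k, edgeInd ω (u i) (u (i + 1)))
      = (n.choose k : ℝ) * ((k - 1).factorial : ℝ) / 2 * (d / n) ^ k *
          (1 + lam ^ k) :=
  stmt17_general n k hk3 d r lam hr π hπ α hα

end
end
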